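/- arXiv:1011.6492 — 7 statements merged into one kernel-verified Lean document; each statement's English description precedes it below -/
import Mathlib

section
/- For a finite connected graph with trivial-holonomy magnetic potential A, the lowest eigenvalue of H_{1,1,A} is 0; conversely if there exists a nonzero f with Q_{1,A}(f) = 0, then the holonomy of A along every closed path is 0 mod 2π. In other words, |B| = 0 if and only if Hol_A = 0. -/
/-! A ground state of energy zero is a section `f` with `f x = e^{iα_{xy}} f y` along every edge.
Transporting it around a closed path multiplies `f (γ 0)` by `e^{i Hol(γ)}`; since `|f|` is
constant on the connected graph and `f ≠ 0`, the holonomy is trivial. Conversely, if every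
holonomy is trivial, fixing a base point `x₀` and setting `f x = e^{-i ∑_p α}` for any walk `p`
from `x₀` to `x` is well defined up to `2π`, and gives a normalized section of energy zero. -/

open Complex Finset

lemma Complex.exp_I_mul_ofReal_eq_one_iff (r : ℝ) :
    exp (I * r) = 1 ↔ ∃ k : ℤ, r = 2 * Real.pi * k := by
  rw [mul_comm, ← Circle.coe_exp, ← Circle.coe_one, Circle.coe_inj, Circle.exp_eq_one]
  simp only [mul_comm]

namespace SimpleGraph

variable {V : Type*} {G : SimpleGraph V}

namespace Walk

def potentialSum (α : V → V → ℝ) : {u v : V} → G.Walk u v → ℝ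
  | _, _, nil => 0
  | _, _, cons (u := x) (v := y) _ p => α x y + potentialSum α p

variable (α : V → V → ℝ)

@[simp] lemma potentialSum_nil {u : V} : (nil : G.Walk u u).potentialSum α = 0 := rfl

@[simp] lemma potentialSum_cons {u v w : V} (h : G.Adj u v) (p : G.Walk v w) :
    (cons h p).potentialSum α = α u v + p.potentialSum α := rfl

lemma potentialSum_append {u v w : V} (p : G.Walk u v) (q : G.Walk v w) :
    (p.append q).potentialSum α = p.potentialSum α + q.potentialSum α := by
  induction p with
  | nil => simp
  | cons h p ih => simp [ih, add_assoc]

lemma potentialSum_reverse (hα : ∀ x y, α x y = - α y x) {u v : V} (p : G.Walk u v) :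
    p.reverse.potentialSum α = - p.potentialSum α := by
  induction p with
  | nil => simp
  | cons h p ih =>
    rw [reverse_cons, potentialSum_append, ih, potentialSum_cons, potentialSum_cons,
      potentialSum_nil, hα]
    ring

lemma sum_getVert_eq_potentialSum {u v : V} (p : G.Walk u v) :
    ∑ i : Fin p.length, α (p.getVert i) (p.getVert (i + 1)) = p.potentialSum α := by
  induction p with
  | nil => rfl
  | cons h p ih =>
    rw [potentialSum_cons, ← ih, show (cons h p).length = p.length + 1 from rfl,
      Fin.sum_univ_succ]
    simp [getVert_cons_succ]

end Walk

variable (G) (α : V → V → ℝ)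

def HasTrivialHolonomy : Prop :=
  ∀ (n : ℕ) (γ : Fin (n+1) → V), γ 0 = γ (Fin.last n) →
    (∀ i : Fin n, G.Adj (γ i.castSucc) (γ i.succ)) →
    ∃ k : ℤ, ∑ i : Fin n, α (γ i.castSucc) (γ i.succ) = 2 * Real.pi * k

def IsParallelSection (f : V → ℂ) : Prop :=
  ∀ x y, G.Adj x y → f x = exp (I * α x y) * f y

noncomputable def magneticEnergy [Fintype V] [DecidableRel G.Adj] (f : V → ℂ) : ℝ :=
  (1/2 : ℝ) * ∑ x, ∑ y, if G.Adj x y then ‖f x - exp (I * α x y) * f y‖^2 else 0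

variable {G α}

section Energy

variable [Fintype V] [DecidableRel G.Adj]

lemma magneticEnergy_nonneg (f : V → ℂ) : 0 ≤ G.magneticEnergy α f := by
  unfold magneticEnergy
  positivity

lemma magneticEnergy_eq_zero_iff {f : V → ℂ} :
    G.magneticEnergy α f = 0 ↔ G.IsParallelSection α f := by
  have hterm_nonneg : ∀ x y, (0 : ℝ) ≤
      if G.Adj x y then ‖f x - exp (I * α x y) * f y‖^2 else 0 := fun _ _ => by positivity
  simp only [magneticEnergy, mul_eq_zero, one_div, inv_eq_zero, OfNat.ofNat_ne_zero, false_or,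
    sum_eq_zero_iff_of_nonneg fun x _ => sum_nonneg fun y _ => hterm_nonneg x y,
    sum_eq_zero_iff_of_nonneg fun y _ => hterm_nonneg _ y, mem_univ, true_implies]
  refine forall₂_congr fun x y => ?_
  by_cases hxy : G.Adj x y <;> simp [hxy, sub_eq_zero]

end Energy

namespace IsParallelSection

variable {f : V → ℂ}

lemma apply_path (hf : G.IsParallelSection α f) {n : ℕ} (γ : Fin (n+1) → V)
    (hγ : ∀ i : Fin n, G.Adj (γ i.castSucc) (γ i.succ)) :
    f (γ 0) = exp (I * ↑(∑ i : Fin n, α (γ i.castSucc) (γ i.succ))) * f (γ (Fin.last n)) := by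
  induction n with
  | zero => simp [Fin.last]
  | succ n ih =>
    have htail := ih (fun i => γ i.succ) fun i => by simpa using hγ i.succ
    rw [hf _ _ (by simpa using hγ 0)]
    simp only [Fin.succ_zero_eq_one, Fin.succ_last] at htail
    simp [htail, Fin.sum_univ_succ, mul_add, exp_add, mul_assoc]

lemma norm_eq_of_reachable (hf : G.IsParallelSection α f) {u v : V} (h : G.Reachable u v) :
    ‖f u‖ = ‖f v‖ := by
  obtain ⟨p⟩ := h
  have := congrArg norm <| hf.apply_path (fun i => p.getVert i) fun i => p.adj_getVert_succ i.isLt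
  rw [norm_mul, norm_exp_I_mul_ofReal, one_mul] at this
  simpa [Fin.last] using this

lemma hasTrivialHolonomy (hf : G.IsParallelSection α f) (hG : G.Connected) {x : V}
    (hx : f x ≠ 0) : G.HasTrivialHolonomy α := by
  intro n γ hclosed hγ
  have hγ0 : f (γ 0) ≠ 0 := by
    rwa [← norm_ne_zero_iff, hf.norm_eq_of_reachable (hG _ x), norm_ne_zero_iff]
  have htransport := hf.apply_path γ hγ
  rw [← hclosed] at htransport
  exact (exp_I_mul_ofReal_eq_one_iff _).1 (mul_left_eq_self₀.1 htransport.symm |>.resolve_right hγ0)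

lemma const_mul (hf : G.IsParallelSection α f) (c : ℂ) :
    G.IsParallelSection α (fun x => c * f x) := fun x y hxy => by
  simp only [hf x y hxy]; ring

end IsParallelSection

namespace HasTrivialHolonomy

lemma exp_potentialSum_eq_one (h : G.HasTrivialHolonomy α) {u : V} (p : G.Walk u u) :
    exp (I * p.potentialSum α) = 1 := by
  obtain ⟨k, hk⟩ := h p.length (fun i => p.getVert i) (by simp [Fin.last])
    fun i => p.adj_getVert_succ i.isLt
  rw [exp_I_mul_ofReal_eq_one_iff]
  exact ⟨k, by simpa [← Walk.sum_getVert_eq_potentialSum] using hk⟩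

lemma exists_parallelSection (h : G.HasTrivialHolonomy α) (hα : ∀ x y, α x y = - α y x)
    (hG : G.Connected) : ∃ f : V → ℂ, G.IsParallelSection α f ∧ ∀ x, ‖f x‖ = 1 := by
  obtain ⟨x₀⟩ := hG.nonempty
  let walkFrom (x : V) : G.Walk x₀ x := (hG x₀ x).some
  refine ⟨fun x => exp (I * ↑(-(walkFrom x).potentialSum α)), fun x y hxy => ?_,
    fun x => norm_exp_I_mul_ofReal _⟩
  have hloop := h.exp_potentialSum_eq_one ((walkFrom x).append (.cons hxy (walkFrom y).reverse))
  rw [Walk.potentialSum_append, Walk.potentialSum_cons, Walk.potentialSum_reverse α hα] at hloop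
  beta_reduce
  rw [← exp_add, ← mul_one (exp (I * ↑(-(walkFrom x).potentialSum α))), ← hloop, ← exp_add]
  congr 1
  push_cast
  ring

lemma exists_normalized_parallelSection [Fintype V] (h : G.HasTrivialHolonomy α)
    (hα : ∀ x y, α x y = - α y x) (hG : G.Connected) :
    ∃ f : V → ℂ, ∑ x, ‖f x‖^2 = 1 ∧ G.IsParallelSection α f := by
  obtain ⟨f, hf, hf_norm⟩ := h.exists_parallelSection hα hG
  have : Nonempty V := hG.nonempty
  have hcard : (0 : ℝ) < Fintype.card V := by exact_mod_cast Fintype.card_pos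
  refine ⟨fun x => ((Real.sqrt (Fintype.card V))⁻¹ : ℝ) * f x, ?_, hf.const_mul _⟩
  simp [hf_norm, inv_pow, Real.sq_sqrt hcard.le, hcard.ne']

end HasTrivialHolonomy

end SimpleGraph

theorem stmt5_general {V : Type*} [Fintype V] (G : SimpleGraph V) [DecidableRel G.Adj]
    (hG : G.Connected)
    (α : V → V → ℝ) (hα : ∀ x y, α x y = - α y x)
    (B : ℝ)
    (hB : IsLeast {r : ℝ | ∃ f : V → ℂ, (∑ x, ‖f x‖^2) = 1 ∧
        r = (1/2 : ℝ) * ∑ x, ∑ y, if G.Adj x y then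
          ‖f x - Complex.exp (Complex.I * (α x y)) * f y‖^2 else 0} B) :
    B = 0 ↔
      ∀ (n : ℕ) (γ : Fin (n+1) → V), γ 0 = γ (Fin.last n) →
        (∀ i : Fin n, G.Adj (γ i.castSucc) (γ i.succ)) →
        ∃ k : ℤ, ∑ i : Fin n, α (γ i.castSucc) (γ i.succ) = 2 * Real.pi * k := by
  change B = 0 ↔ G.HasTrivialHolonomy α
  constructor
  · rintro rfl
    obtain ⟨f, hf_norm, hf_energy⟩ := hB.1
    obtain ⟨x, hx⟩ : ∃ x, f x ≠ 0 := by
      by_contra! hf_zero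
      simp [hf_zero] at hf_norm
    exact (SimpleGraph.magneticEnergy_eq_zero_iff.1 hf_energy.symm).hasTrivialHolonomy hG hx
  · intro hhol
    obtain ⟨f, hf_norm, hf⟩ := hhol.exists_normalized_parallelSection hα hG
    obtain ⟨g, -, rfl⟩ := hB.1
    exact le_antisymm (hB.2 ⟨f, hf_norm, (SimpleGraph.magneticEnergy_eq_zero_iff.2 hf).symm⟩)
      (SimpleGraph.magneticEnergy_nonneg g)

/-- |B| = 0 if and only if Hol_A = 0, where |B| is the lowest eigenvalue of H_{1,1,A},
i.e. the minimum of the Rayleigh quotient of Q_{1,A} on a finite connected graph. -/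
theorem stmt5 {V : Type*} [Fintype V] [Nonempty V] (G : SimpleGraph V) [DecidableRel G.Adj]
    (hG : G.Connected)
    (α : V → V → ℝ) (hα : ∀ x y, α x y = - α y x)
    (B : ℝ)
    (hB : IsLeast {r : ℝ | ∃ f : V → ℂ, (∑ x, ‖f x‖^2) = 1 ∧
        r = (1/2 : ℝ) * ∑ x, ∑ y, if G.Adj x y then
          ‖f x - Complex.exp (Complex.I * (α x y)) * f y‖^2 else 0} B) :
    B = 0 ↔
      ∀ (n : ℕ) (γ : Fin (n+1) → V), γ 0 = γ (Fin.last n) →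
        (∀ i : Fin n, G.Adj (γ i.castSucc) (γ i.succ)) →
        ∃ k : ℤ, ∑ i : Fin n, α (γ i.castSucc) (γ i.succ) = 2 * Real.pi * k :=
  stmt5_general G hG α hα B hB
end

section
/- If Q_{1,A}(f) = 0 for a function f on a finite connected graph, then |f| is constant, and for every closed path x_0,...,x_n = x_0, f(x_0) = e^{−i Hol} f(x_0) where Hol is the sum of α along the path; hence if f ≠ 0 every holonomy is a multiple of 2π. -/
/-!
`Q_{1,A}(f)` is a sum of squares, so it vanishes exactly when `f x = e^{iα_{xy}} f y` on every
edge. The phase has modulus one, so `|f|` is constant along edges, hence on the connected graph;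
transporting `f` around a closed path multiplies `f(x₀)` by `e^{i Hol}`, which must therefore be
`1` as soon as `f(x₀) ≠ 0`.
-/

open Complex Finset

/-- The magnetic energy `Q_{1,A}(f)`; each edge is counted from both ends, hence the `1/2`. -/
noncomputable def magneticEnergy {V : Type*} [Fintype V] (G : SimpleGraph V) [DecidableRel G.Adj]
    (α : V → V → ℝ) (f : V → ℂ) : ℝ :=
  (1/2 : ℝ) * ∑ x, ∑ y, if G.Adj x y then ‖f x - exp (I * (α x y)) * f y‖^2 else 0

theorem magneticEnergy_eq_zero_iff {V : Type*} [Fintype V] {G : SimpleGraph V}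
    [DecidableRel G.Adj] {α : V → V → ℝ} {f : V → ℂ} :
    magneticEnergy G α f = 0 ↔ ∀ x y, G.Adj x y → f x = exp (I * α x y) * f y := by
  have hterm_nonneg : ∀ x y, 0 ≤ if G.Adj x y then ‖f x - exp (I * α x y) * f y‖^2 else 0 := by
    intro x y
    split_ifs <;> positivity
  rw [magneticEnergy, mul_eq_zero_iff_left (by norm_num),
    sum_eq_zero_iff_of_nonneg fun x _ => sum_nonneg fun y _ => hterm_nonneg x y]
  simp only [sum_eq_zero_iff_of_nonneg fun y _ => hterm_nonneg _ y, mem_univ, true_implies]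
  refine forall₂_congr fun x y => ?_
  split_ifs with hxy <;> simp [hxy, sub_eq_zero]

theorem SimpleGraph.Reachable.apply_eq_of_forall_adj {V β : Type*} {G : SimpleGraph V}
    {g : V → β} (hg : ∀ x y, G.Adj x y → g x = g y) {u v : V} (h : G.Reachable u v) :
    g u = g v := by
  obtain ⟨w⟩ := h
  induction w with
  | nil => rfl
  | cons hadj _ ih => exact (hg _ _ hadj).trans ih

theorem apply_zero_eq_prod_mul_apply_last {V M : Type*} [CommMonoid M] (c : V → V → M)
    (f : V → M) {n : ℕ} (γ : Fin (n + 1) → V)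
    (hγ : ∀ i : Fin n, f (γ i.castSucc) = c (γ i.castSucc) (γ i.succ) * f (γ i.succ)) :
    f (γ 0) = (∏ i : Fin n, c (γ i.castSucc) (γ i.succ)) * f (γ (Fin.last n)) := by
  induction n with
  | zero => simp [Fin.last]
  | succ n ih =>
    have hinit := ih (fun i => γ i.castSucc) fun i => by
      simpa only [Fin.succ_castSucc] using hγ i.castSucc
    rw [Fin.prod_univ_castSucc, mul_assoc, ← Fin.succ_last, ← hγ (Fin.last n)]
    simpa only [Fin.succ_castSucc, Fin.castSucc_zero] using hinit

section MagneticGraph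

variable {V : Type*} {G : SimpleGraph V} {α : V → V → ℝ} {f : V → ℂ}

theorem norm_eq_of_forall_adj_eq_exp_mul (hG : G.Preconnected)
    (hf : ∀ x y, G.Adj x y → f x = exp (I * α x y) * f y) (x y : V) : ‖f x‖ = ‖f y‖ :=
  (hG x y).apply_eq_of_forall_adj (g := fun v => ‖f v‖) fun x y hxy => by
    rw [hf x y hxy, norm_mul, norm_exp_I_mul_ofReal, one_mul]

theorem apply_zero_eq_exp_holonomy_mul
    (hf : ∀ x y, G.Adj x y → f x = exp (I * α x y) * f y) {n : ℕ} (γ : Fin (n + 1) → V)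
    (hγ : ∀ i : Fin n, G.Adj (γ i.castSucc) (γ i.succ)) :
    f (γ 0) = exp (I * ∑ i : Fin n, α (γ i.castSucc) (γ i.succ)) * f (γ (Fin.last n)) := by
  rw [ofReal_sum, mul_sum, exp_sum]
  exact apply_zero_eq_prod_mul_apply_last (fun x y => exp (I * α x y)) f γ fun i => hf _ _ (hγ i)

theorem apply_zero_eq_exp_neg_holonomy_mul_of_closed
    (hf : ∀ x y, G.Adj x y → f x = exp (I * α x y) * f y) {n : ℕ} (γ : Fin (n + 1) → V)
    (hclosed : γ 0 = γ (Fin.last n)) (hγ : ∀ i : Fin n, G.Adj (γ i.castSucc) (γ i.succ)) :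
    f (γ 0) = exp (-I * ∑ i : Fin n, α (γ i.castSucc) (γ i.succ)) * f (γ 0) := by
  set θ : ℝ := ∑ i : Fin n, α (γ i.castSucc) (γ i.succ)
  have htransport : f (γ 0) = exp (I * θ) * f (γ 0) := by
    conv_rhs => rw [hclosed]
    exact apply_zero_eq_exp_holonomy_mul hf γ hγ
  calc f (γ 0) = exp (-I * θ) * (exp (I * θ) * f (γ 0)) := by
        rw [← mul_assoc, ← exp_add, neg_mul, neg_add_cancel, exp_zero, one_mul]
    _ = exp (-I * θ) * f (γ 0) := by rw [← htransport]

end MagneticGraph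

theorem exists_int_eq_two_pi_mul_of_exp_neg_I_mul_eq_one {θ : ℝ} (h : exp (-I * θ) = 1) :
    ∃ k : ℤ, θ = 2 * Real.pi * k := by
  have hcircle : Circle.exp (-θ) = 1 := Circle.ext <| by
    rw [Circle.coe_exp, Circle.coe_one, ← h]
    push_cast
    ring_nf
  obtain ⟨n, hn⟩ := Circle.exp_eq_one.1 hcircle
  exact ⟨-n, by push_cast; linarith⟩

theorem stmt6_general {V : Type*} [Fintype V] (G : SimpleGraph V) [DecidableRel G.Adj]
    (hG : G.Connected)
    (α : V → V → ℝ)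
    (f : V → ℂ)
    (hQ : ((1/2 : ℝ) * ∑ x, ∑ y, if G.Adj x y then
        ‖f x - Complex.exp (Complex.I * (α x y)) * f y‖^2 else 0) = 0) :
    (∀ x y, ‖f x‖ = ‖f y‖) ∧
    (∀ (n : ℕ) (γ : Fin (n+1) → V), γ 0 = γ (Fin.last n) →
      (∀ i : Fin n, G.Adj (γ i.castSucc) (γ i.succ)) →
      f (γ 0) = Complex.exp (-Complex.I * (∑ i : Fin n, α (γ i.castSucc) (γ i.succ))) * f (γ 0)) ∧
    (f ≠ 0 →
      ∀ (n : ℕ) (γ : Fin (n+1) → V), γ 0 = γ (Fin.last n) →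
        (∀ i : Fin n, G.Adj (γ i.castSucc) (γ i.succ)) →
        ∃ k : ℤ, ∑ i : Fin n, α (γ i.castSucc) (γ i.succ) = 2 * Real.pi * k) := by
  have hf := magneticEnergy_eq_zero_iff.1 (show magneticEnergy G α f = 0 from hQ)
  have hnorm := norm_eq_of_forall_adj_eq_exp_mul hG.preconnected hf
  refine ⟨hnorm, fun n γ => apply_zero_eq_exp_neg_holonomy_mul_of_closed hf γ, ?_⟩
  intro hf_ne n γ hclosed hγ
  have hbase_ne : f (γ 0) ≠ 0 := fun h0 =>
    hf_ne <| funext fun v => norm_eq_zero.1 <| (hnorm v (γ 0)).trans (by rw [h0, norm_zero])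
  apply exists_int_eq_two_pi_mul_of_exp_neg_I_mul_eq_one
  have h := apply_zero_eq_exp_neg_holonomy_mul_of_closed hf γ hclosed hγ
  exact mul_right_cancel₀ hbase_ne (by rw [one_mul, ← h])

/-- If Q_{1,A}(f) = 0 on a finite connected graph then |f| is constant,
f(x₀) = e^{−i·Hol} f(x₀) for every closed path based at x₀, and if f ≠ 0 then
every holonomy is a multiple of 2π. -/
theorem stmt6 {V : Type*} [Fintype V] (G : SimpleGraph V) [DecidableRel G.Adj]
    (hG : G.Connected)
    (α : V → V → ℝ) (hα : ∀ x y, α x y = - α y x)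
    (f : V → ℂ)
    (hQ : ((1/2 : ℝ) * ∑ x, ∑ y, if G.Adj x y then
        ‖f x - Complex.exp (Complex.I * (α x y)) * f y‖^2 else 0) = 0) :
    (∀ x y, ‖f x‖ = ‖f y‖) ∧
    (∀ (n : ℕ) (γ : Fin (n+1) → V), γ 0 = γ (Fin.last n) →
      (∀ i : Fin n, G.Adj (γ i.castSucc) (γ i.succ)) →
      f (γ 0) = Complex.exp (-Complex.I * (∑ i : Fin n, α (γ i.castSucc) (γ i.succ))) * f (γ 0)) ∧
    (f ≠ 0 →
      ∀ (n : ℕ) (γ : Fin (n+1) → V), γ 0 = γ (Fin.last n) →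
        (∀ i : Fin n, G.Adj (γ i.castSucc) (γ i.succ)) →
        ∃ k : ℤ, ∑ i : Fin n, α (γ i.castSucc) (γ i.succ) = 2 * Real.pi * k) :=
  stmt6_general G hG α f hQ
end

section
/- For the cyclic graph ℤ/Nℤ, the norm |B| of a magnetic field with holonomy Ω, namely min_{ξ^N=1} |1 − ξ e^{iΩ/N}|², is maximized over Ω when Ω = π, with maximal value |1 − e^{iπ/N}|². -/
open Complex

/- Writing |1 - e^{iθ}| = 2 sin (θ/2), the norm |B| is increasing in the distance δ of Ω to 2πℤ,
and δ ≤ π because rounding Ω/2π to the nearest integer moves it by at most 1/2; for Ω = π the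
distance π is attained, since π - 2πk = π(1 - 2k) with 1 - 2k odd. -/

theorem norm_one_sub_exp_I_mul_le {a b : ℝ} (ha : 0 ≤ a) (hab : a ≤ b) (hb : b ≤ Real.pi) :
    ‖1 - exp (I * a)‖ ≤ ‖1 - exp (I * b)‖ := by
  have hsin_nonneg {x : ℝ} (hx : 0 ≤ x) (hx' : x ≤ Real.pi) : 0 ≤ Real.sin (x / 2) :=
    Real.sin_nonneg_of_nonneg_of_le_pi (by linarith) (by linarith)
  rw [norm_sub_rev, norm_exp_I_mul_ofReal_sub_one, norm_sub_rev, norm_exp_I_mul_ofReal_sub_one,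
    Real.norm_of_nonneg (by linarith [hsin_nonneg ha (hab.trans hb)]),
    Real.norm_of_nonneg (by linarith [hsin_nonneg (ha.trans hab) hb])]
  gcongr
  exact Real.sin_le_sin_of_le_of_le_pi_div_two (by linarith [Real.pi_pos]) (by linarith)
    (by linarith)

theorem abs_sub_mul_round_div_le {α : Type*} [Field α] [LinearOrder α] [IsStrictOrderedRing α]
    [FloorRing α] {p : α} (hp : 0 < p) (x : α) : |x - p * round (x / p)| ≤ p / 2 := by
  have hx : x - p * round (x / p) = p * (x / p - round (x / p)) := by field_simp
  rw [hx, abs_mul, abs_of_pos hp]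
  linarith [mul_le_mul_of_nonneg_left (abs_sub_round (x / p)) hp.le]

theorem le_abs_sub_two_mul_mul_intCast {α : Type*} [CommRing α] [LinearOrder α]
    [IsStrictOrderedRing α] {a : α} (ha : 0 ≤ a) (k : ℤ) : a ≤ |a - 2 * a * k| := by
  have hodd : (1 : α) ≤ |1 - 2 * (k : α)| := by
    exact_mod_cast Int.one_le_abs (show (1 - 2 * k : ℤ) ≠ 0 by omega)
  calc a = a * 1 := (mul_one a).symm
    _ ≤ a * |1 - 2 * (k : α)| := mul_le_mul_of_nonneg_left hodd ha
    _ = |a - 2 * a * k| := by rw [← abs_of_nonneg ha, ← abs_mul, abs_of_nonneg ha]; ring_nf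

theorem stmt8_general (N : ℕ) :
    (∀ Ω δ : ℝ, IsLeast {d : ℝ | ∃ k : ℤ, d = |Ω - 2 * Real.pi * k|} δ →
      ‖1 - Complex.exp (Complex.I * (δ / N))‖^2
        ≤ ‖1 - Complex.exp (Complex.I * (Real.pi / N))‖^2) ∧
    IsLeast {d : ℝ | ∃ k : ℤ, d = |Real.pi - 2 * Real.pi * k|} Real.pi := by
  refine ⟨fun Ω δ ⟨⟨k, hk⟩, hδ_le⟩ => ?_,
    ⟨0, by simp [abs_of_pos Real.pi_pos]⟩, fun d ⟨k, hk⟩ => ?_⟩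
  · have hδ_nonneg : 0 ≤ δ := hk ▸ abs_nonneg _
    have hδ_le_pi : δ ≤ Real.pi := by
      have := abs_sub_mul_round_div_le Real.two_pi_pos Ω
      linarith [hδ_le ⟨round (Ω / (2 * Real.pi)), rfl⟩]
    simp only [← ofReal_natCast, ← ofReal_div]
    gcongr
    exact norm_one_sub_exp_I_mul_le (by positivity)
      (div_le_div_of_nonneg_right hδ_le_pi N.cast_nonneg)
      (div_nat_le_self_of_nonnneg Real.pi_pos.le N)
  · exact hk ▸ le_abs_sub_two_mul_mul_intCast Real.pi_pos.le k

/-- The norm |B|(Ω) = |1 − e^{iδ(Ω)/N}|² (δ(Ω) = dist(Ω, 2πℤ)) of a magnetic field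
on the cyclic graph ℤ/Nℤ is maximized at Ω = π, with maximal value |1 − e^{iπ/N}|². -/
theorem stmt8 (N : ℕ) (hN : 1 ≤ N) :
    (∀ Ω δ : ℝ, IsLeast {d : ℝ | ∃ k : ℤ, d = |Ω - 2 * Real.pi * k|} δ →
      ‖1 - Complex.exp (Complex.I * (δ / N))‖^2
        ≤ ‖1 - Complex.exp (Complex.I * (Real.pi / N))‖^2) ∧
    IsLeast {d : ℝ | ∃ k : ℤ, d = |Real.pi - 2 * Real.pi * k|} Real.pi :=
  stmt8_general N
end

section
/- min over N-th roots of unity ξ of |1 − ξ e^{iΩ/N}|² equals |1 − e^{iδ/N}|² where δ = dist(Ω, 2πℤ) = inf_{k∈ℤ}|Ω − 2πk|. -/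
/-! The point `z = ξ e^{iΩ/N}` lies on the unit circle, so `‖1 - z‖² = 2 - 2 cos (arg z)`.
Since `z ^ N = e^{iΩ}`, `N arg z ∈ Ω + 2πℤ`, hence `δ ≤ N |arg z|` with `|arg z| ≤ π`, and
`cos (arg z) ≤ cos (δ / N)` because `cos` decreases on `[0, π]`. If `δ = |Ω - 2πk|`, the root
`ξ = e^{-2πik/N}` attains the bound. -/

open Complex

namespace Complex

lemma sq_norm_one_sub_of_norm_eq_one {z : ℂ} (hz : ‖z‖ = 1) : ‖1 - z‖ ^ 2 = 2 - 2 * z.re := by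
  rw [Complex.sq_norm, normSq_sub, ← Complex.sq_norm z, hz]
  norm_num

lemma sq_norm_one_sub_exp_ofReal_mul_I (x : ℝ) : ‖1 - exp (x * I)‖ ^ 2 = 2 - 2 * Real.cos x := by
  rw [sq_norm_one_sub_of_norm_eq_one (norm_exp_ofReal_mul_I x), exp_ofReal_mul_I_re]

lemma norm_eq_one_of_pow_eq_exp_ofReal_mul_I {N : ℕ} (hN : N ≠ 0) {Ω : ℝ} {z : ℂ}
    (hz : z ^ N = exp (Ω * I)) : ‖z‖ = 1 := by
  rw [← pow_left_inj₀ (norm_nonneg z) zero_le_one hN, ← norm_pow, hz, norm_exp_ofReal_mul_I,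
    one_pow]

lemma re_le_cos_of_pow_eq_exp {N : ℕ} (hN : 0 < N) {Ω δ : ℝ} (hδ₀ : 0 ≤ δ)
    (hδ : δ ∈ lowerBounds {d : ℝ | ∃ k : ℤ, d = |Ω - 2 * Real.pi * k|})
    {z : ℂ} (hz : z ^ N = exp (Ω * I)) : z.re ≤ Real.cos (δ / N) := by
  have hNR : (0 : ℝ) < N := by exact_mod_cast hN
  have hz1 := norm_eq_one_of_pow_eq_exp_ofReal_mul_I hN.ne' hz
  have hz_exp : z = exp (arg z * I) := by
    simpa [hz1] using (norm_mul_exp_arg_mul_I z).symm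
  obtain ⟨n, hn⟩ : ∃ n : ℤ, (N * arg z : ℂ) * I = Ω * I + n * (2 * Real.pi * I) := by
    rw [← exp_eq_exp_iff_exists_int, mul_assoc, exp_nat_mul, ← hz_exp, hz]
  have hδ_le : δ ≤ N * |arg z| := by
    calc δ ≤ |Ω - 2 * Real.pi * ((-n : ℤ) : ℝ)| := hδ ⟨-n, rfl⟩
      _ = N * |arg z| := by
        have him : (N : ℝ) * arg z = Ω + n * (2 * Real.pi) := by simpa using congrArg im hn
        rw [← abs_of_pos hNR, ← abs_mul, him]
        push_cast
        ring_nf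
  calc z.re = Real.cos |arg z| := by
        rw [Real.cos_abs, cos_arg (by rintro rfl; simp at hz1), hz1, div_one]
    _ ≤ Real.cos (δ / N) :=
      Real.cos_le_cos_of_nonneg_of_le_pi (by positivity) (abs_arg_le_pi z)
        ((div_le_iff₀ hNR).2 (by linarith))

end Complex

/-- min over N-th roots of unity ξ of |1 − ξe^{iΩ/N}|² equals |1 − e^{iδ/N}|²,
where δ = dist(Ω, 2πℤ). -/
theorem stmt9 (N : ℕ) (hN : 1 ≤ N) (Ω δ : ℝ)
    (hδ : IsLeast {d : ℝ | ∃ k : ℤ, d = |Ω - 2 * Real.pi * k|} δ) :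
    IsLeast {r : ℝ | ∃ ξ : ℂ, ξ ^ N = 1 ∧
        r = ‖1 - ξ * Complex.exp (Complex.I * (Ω / N))‖^2}
      (‖1 - Complex.exp (Complex.I * (δ / N))‖^2) := by
  obtain ⟨⟨k, hk⟩, hδ_lb⟩ := hδ
  have hN₀ : (N : ℂ) ≠ 0 := Nat.cast_ne_zero.mpr (by omega)
  have hΩ : I * ((Ω : ℂ) / N) = ((Ω / N : ℝ) : ℂ) * I := by push_cast; ring
  have hδN : I * ((δ : ℂ) / N) = ((δ / N : ℝ) : ℂ) * I := by push_cast; ring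
  rw [hΩ, hδN, sq_norm_one_sub_exp_ofReal_mul_I]
  refine ⟨⟨exp ((-(2 * Real.pi * k / N) : ℝ) * I), ?root, ?attained⟩, ?lower⟩
  case root =>
    rw [← exp_nat_mul, ← exp_int_mul_two_pi_mul_I (-k)]
    congr 1
    push_cast
    field_simp
  case attained =>
    have hangle : -(2 * Real.pi * k / N) + Ω / N = (Ω - 2 * Real.pi * k) / N := by ring
    rw [← exp_add, ← add_mul, ← ofReal_add, sq_norm_one_sub_exp_ofReal_mul_I, hangle,
      ← Real.cos_abs ((Ω - _) / N), abs_div, Nat.abs_cast, hk]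
  case lower =>
    rintro _ ⟨ξ, hξ, rfl⟩
    have hpow : (ξ * exp ((Ω / N : ℝ) * I)) ^ N = exp (Ω * I) := by
      rw [mul_pow, hξ, one_mul, ← exp_nat_mul]
      congr 1
      push_cast
      field_simp
    rw [sq_norm_one_sub_of_norm_eq_one (norm_eq_one_of_pow_eq_exp_ofReal_mul_I (by omega) hpow)]
    linarith [re_le_cos_of_pow_eq_exp hN (hk ▸ abs_nonneg _) hδ_lb hpow]
end

section
/- Agmon-type identity: if v satisfies Hv = 0 (weakly) on G and f : V → ℝ has finite support, then ⟨fv, H(fv)⟩ = (1/2) Σ_{x∈V} Σ_{y∼x} Re[v(x) conj(v(y)) C_{yx}] (f(x) − f(y))², where C_{yx} = c_{xy} e^{iα_{yx}}. -/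
/-!
Write `ω² H = d - A` with `d` the weighted degree and `A` the Hermitian magnetic hopping matrix.
For `B x y = v x * conj (v y) * conj (A x y)` the equation `H v = 0` says `∑ y, B x y = d x * |v x|²`,
so `⟨f v, H (f v)⟩ = ∑ x, ∑ y, B x y * f x * (f x - f y)`. As `B` is Hermitian, `Re B` is symmetric
and `Im B` antisymmetric with zero row sums; symmetrising in `x ↔ y` kills the imaginary part and
turns `f x * (f x - f y)` into `(f x - f y)² / 2`.
-/
open Complex Finset
open scoped ComplexConjugate

section

variable {V : Type*} [Fintype V]

theorem sum_sum_mul_mul_sub_of_symm (r : V → V → ℝ) (hr : ∀ x y, r y x = r x y) (f : V → ℝ) :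
    ∑ x, ∑ y, r x y * (f x * (f x - f y)) = 1 / 2 * ∑ x, ∑ y, r x y * (f x - f y) ^ 2 := by
  have hswap : ∑ x, ∑ y, r x y * (f x * (f x - f y)) = ∑ x, ∑ y, r x y * (f y * (f y - f x)) := by
    rw [Finset.sum_comm]
    simp only [hr]
  have hsplit : ∑ x, ∑ y, r x y * (f x - f y) ^ 2
      = ∑ x, ∑ y, r x y * (f x * (f x - f y)) + ∑ x, ∑ y, r x y * (f y * (f y - f x)) := by
    simp only [← Finset.sum_add_distrib]
    congr! 2 with x _ y
    ring
  linarith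

theorem sum_sum_mul_mul_sub_of_antisymm (s : V → V → ℝ) (hs : ∀ x y, s y x = -s x y)
    (hrow : ∀ x, ∑ y, s x y = 0) (f : V → ℝ) :
    ∑ x, ∑ y, s x y * (f x * (f x - f y)) = 0 := by
  have hdiag : ∑ x, ∑ y, s x y * f x ^ 2 = 0 := by
    simp [← Finset.sum_mul, hrow]
  have hcross : ∑ x, ∑ y, s x y * (f x * f y) = -∑ x, ∑ y, s x y * (f x * f y) := by
    conv_lhs => rw [Finset.sum_comm]
    rw [← Finset.sum_neg_distrib]
    refine Finset.sum_congr rfl fun x _ => ?_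
    rw [← Finset.sum_neg_distrib]
    refine Finset.sum_congr rfl fun y _ => ?_
    rw [hs x y]
    ring
  have hsplit : ∑ x, ∑ y, s x y * (f x * (f x - f y))
      = ∑ x, ∑ y, s x y * f x ^ 2 - ∑ x, ∑ y, s x y * (f x * f y) := by
    simp only [← Finset.sum_sub_distrib]
    congr! 2 with x _ y
    ring
  linarith

theorem sum_mul_conj_sub_eq_half_sum_re_mul_sq (a : V → V → ℂ)
    (ha : ∀ x y, a y x = conj (a x y)) (d : V → ℝ) (v : V → ℂ)
    (hv : ∀ x, d x * v x = ∑ y, a x y * v y) (f : V → ℝ) :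
    ∑ x, (f x : ℂ) * v x * conj (d x * (f x * v x) - ∑ y, a x y * (f y * v y))
      = ((1 / 2 * ∑ x, ∑ y, (v x * conj (v y) * conj (a x y)).re * (f x - f y) ^ 2 : ℝ) : ℂ) := by
  set B : V → V → ℂ := fun x y => v x * conj (v y) * conj (a x y) with hB
  have hB_swap : ∀ x y, B y x = conj (B x y) := by
    intro x y
    simp only [hB, ha x y, map_mul, conj_conj]
    ring
  have hB_row : ∀ x, ∑ y, B x y = (d x * normSq (v x) : ℝ) := by
    intro x
    have : ∑ y, B x y = v x * conj (d x * v x) := by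
      simp only [hB, hv x, map_sum, map_mul, Finset.mul_sum]
      exact Finset.sum_congr rfl fun y _ => by ring
    rw [this, map_mul, conj_ofReal, mul_left_comm, mul_conj, ofReal_mul]
  have hlhs : ∑ x, (f x : ℂ) * v x * conj (d x * (f x * v x) - ∑ y, a x y * (f y * v y))
      = ∑ x, ∑ y, B x y * (f x * (f x - f y) : ℝ) := by
    refine Finset.sum_congr rfl fun x _ => ?_
    have hd : (d x : ℂ) * (f x * v x) = ∑ y, a x y * (f x * v y) := by
      rw [mul_left_comm, hv x, Finset.mul_sum]
      exact Finset.sum_congr rfl fun y _ => by ring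
    rw [hd, ← Finset.sum_sub_distrib, map_sum, Finset.mul_sum]
    refine Finset.sum_congr rfl fun y _ => ?_
    simp only [hB, map_mul, map_sub, conj_ofReal]
    push_cast
    ring
  rw [hlhs]
  apply Complex.ext
  · simp only [re_sum, re_mul_ofReal, ofReal_re]
    exact sum_sum_mul_mul_sub_of_symm _ (fun x y => by rw [hB_swap, conj_re]) f
  · simp only [im_sum, im_mul_ofReal, ofReal_im]
    exact sum_sum_mul_mul_sub_of_antisymm _ (fun x y => by rw [hB_swap, conj_im])
      (fun x => by rw [← im_sum, hB_row, ofReal_im]) f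

end

namespace SimpleGraph

variable {V : Type*} (G : SimpleGraph V) [DecidableRel G.Adj]

noncomputable def magneticHopping (c α : V → V → ℝ) (x y : V) : ℂ :=
  if G.Adj x y then c x y * exp (I * α x y) else 0

def weightedDegree [Fintype V] (c : V → V → ℝ) (x : V) : ℝ :=
  ∑ y, if G.Adj x y then c x y else 0

variable {G}

theorem magneticHopping_swap {c α : V → V → ℝ} (hc : ∀ x y, c x y = c y x)
    (hα : ∀ x y, α x y = -α y x) (x y : V) :
    G.magneticHopping c α y x = conj (G.magneticHopping c α x y) := by
  by_cases hxy : G.Adj x y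
  · rw [magneticHopping, magneticHopping, if_pos hxy.symm, if_pos hxy, map_mul, conj_ofReal,
      ← exp_conj, map_mul, conj_I, conj_ofReal, hc, hα x y, ofReal_neg]
    ring_nf
  · rw [magneticHopping, magneticHopping, if_neg (mt Adj.symm hxy), if_neg hxy, map_zero]

theorem sum_adj_mul_sub_eq [Fintype V] (c α : V → V → ℝ) (u : V → ℂ) (x : V) :
    (∑ y, if G.Adj x y then (c x y : ℂ) * (u x - exp (I * α x y) * u y) else 0)
      = G.weightedDegree c x * u x - ∑ y, G.magneticHopping c α x y * u y := by
  rw [weightedDegree, ofReal_sum, Finset.sum_mul, ← Finset.sum_sub_distrib]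
  refine Finset.sum_congr rfl fun y _ => ?_
  by_cases hxy : G.Adj x y
  · simp only [magneticHopping, hxy, if_true]
    ring
  · simp [magneticHopping, hxy]

end SimpleGraph

theorem stmt13_general {V : Type*} [Fintype V] (G : SimpleGraph V) [DecidableRel G.Adj]
    (ω : V → ℝ) (c : V → V → ℝ) (α : V → V → ℝ)
    (hω : ∀ x, 0 < ω x)
    (hcsymm : ∀ x y, c x y = c y x)
    (hα : ∀ x y, α x y = - α y x)
    (H : (V → ℂ) → (V → ℂ))
    (hH : ∀ u x, H u x = (1 / (ω x : ℂ)^2) *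
        ∑ y, if G.Adj x y then (c x y : ℂ) * (u x - Complex.exp (Complex.I * (α x y)) * u y) else 0)
    (v : V → ℂ) (hv : ∀ x, H v x = 0)
    (f : V → ℝ) :
    ∑ x, (ω x : ℂ)^2 * ((f x : ℂ) * v x) * (starRingEnd ℂ) (H (fun y => (f y : ℂ) * v y) x)
      = (((1/2 : ℝ) * ∑ x, ∑ y, if G.Adj x y then
          (v x * (starRingEnd ℂ) (v y) * ((c x y : ℂ) * Complex.exp (Complex.I * (α y x)))).re
            * (f x - f y)^2 else 0 : ℝ) : ℂ) := by
  have hHω : ∀ u x, (ω x : ℂ) ^ 2 * H u x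
      = G.weightedDegree c x * u x - ∑ y, G.magneticHopping c α x y * u y := by
    intro u x
    have hω0 : (ω x : ℂ) ^ 2 ≠ 0 := pow_ne_zero 2 (ofReal_ne_zero.2 (hω x).ne')
    rw [hH, ← mul_assoc, mul_one_div_cancel hω0, one_mul, G.sum_adj_mul_sub_eq]
  have hvω : ∀ x, G.weightedDegree c x * v x = ∑ y, G.magneticHopping c α x y * v y := by
    intro x
    rw [← sub_eq_zero, ← hHω, hv, mul_zero]
  calc _ = ∑ x, (f x : ℂ) * v x * conj ((ω x : ℂ) ^ 2 * H (fun y => (f y : ℂ) * v y) x) := by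
        refine Finset.sum_congr rfl fun x _ => ?_
        rw [map_mul, ← ofReal_pow, conj_ofReal]
        ring
    _ = _ := by
        simp only [hHω]
        exact sum_mul_conj_sub_eq_half_sum_re_mul_sq _
          (SimpleGraph.magneticHopping_swap hcsymm hα) _ v hvω f
    _ = _ := by
        congr 3 with x
        refine Finset.sum_congr rfl fun y _ => ?_
        by_cases hxy : G.Adj x y
        · rw [if_pos hxy, ← SimpleGraph.magneticHopping_swap hcsymm hα,
            SimpleGraph.magneticHopping, if_pos hxy.symm, hcsymm y x]
        · simp [SimpleGraph.magneticHopping, hxy]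

/-- Agmon-type identity: if Hv = 0 and f is real-valued, then
⟨fv, H(fv)⟩ = (1/2) Σ_x Σ_{y∼x} Re[v(x) conj(v(y)) C_{yx}] (f(x) − f(y))². -/
theorem stmt13 {V : Type*} [Fintype V] (G : SimpleGraph V) [DecidableRel G.Adj]
    (ω : V → ℝ) (c : V → V → ℝ) (α : V → V → ℝ)
    (hω : ∀ x, 0 < ω x)
    (hc : ∀ x y, G.Adj x y → 0 < c x y)
    (hcsymm : ∀ x y, c x y = c y x)
    (hα : ∀ x y, α x y = - α y x)
    (H : (V → ℂ) → (V → ℂ))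
    (hH : ∀ u x, H u x = (1 / (ω x : ℂ)^2) *
        ∑ y, if G.Adj x y then (c x y : ℂ) * (u x - Complex.exp (Complex.I * (α x y)) * u y) else 0)
    (v : V → ℂ) (hv : ∀ x, H v x = 0)
    (f : V → ℝ) :
    ∑ x, (ω x : ℂ)^2 * ((f x : ℂ) * v x) * (starRingEnd ℂ) (H (fun y => (f y : ℂ) * v y) x)
      = (((1/2 : ℝ) * ∑ x, ∑ y, if G.Adj x y then
          (v x * (starRingEnd ℂ) (v y) * ((c x y : ℂ) * Complex.exp (Complex.I * (α y x)))).re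
            * (f x - f y)^2 else 0 : ℝ) : ℂ) :=
  stmt13_general G ω c α hω hcsymm hα H hH v hv f
end

section
/- In ℤ/Nℤ viewed as a cyclic graph with constant magnetic phase Ω/N on each edge, for every f : ℤ/Nℤ → ℂ: Σ_{x} |f(x) − e^{iΩ/N} f(x+1)|² ≥ |1 − e^{iδ/N}|² Σ_x |f(x)|², where δ = dist(Ω, 2πℤ). -/
/-!
The discrete Fourier transform diagonalises `f ↦ f - c • f (· + 1)`, `c = exp (i Ω / N)`, with
eigenvalues `1 - exp (i (Ω + 2πk) / N)`, so by Parseval it suffices to bound these from below.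
Since `|1 - exp (iθ)|² = 2 - 2 cos θ` and the representative of `(Ω + 2πk) / N` modulo `2π` in
`[-π, π]` is `N⁻¹` times a distance from `Ω` to `2πℤ`, hence at least `δ / N` in absolute value,
monotonicity of `cos` on `[0, π]` gives the bound `|1 - exp (iδ / N)|²`.
-/

open Complex Finset

namespace ZMod

open scoped ComplexConjugate

variable {N : ℕ} [NeZero N]

lemma conj_stdAddChar (a : ZMod N) : conj (stdAddChar a) = stdAddChar (-a) := by
  rw [stdAddChar_apply, stdAddChar_apply, AddChar.map_neg_eq_inv, Circle.coe_inv_eq_conj]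

lemma sum_stdAddChar_mul_dft (Φ : ZMod N → ℂ) (j : ZMod N) :
    ∑ k, stdAddChar (k * j) * 𝓕 Φ k = N * Φ j := by
  have h := invDFT_apply (𝓕 Φ) j
  rw [LinearEquiv.symm_apply_apply, smul_eq_mul] at h
  rw [h, ← mul_assoc, mul_inv_cancel₀ (NeZero.ne (N : ℂ)), one_mul]
  rfl

lemma sum_conj_dft_mul_dft (Φ Ψ : ZMod N → ℂ) :
    ∑ k, conj (𝓕 Φ k) * 𝓕 Ψ k = N * ∑ j, conj (Φ j) * Ψ j := by
  calc ∑ k, conj (𝓕 Φ k) * 𝓕 Ψ k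
      = ∑ j, conj (∑ k, stdAddChar (k * j) * 𝓕 Φ k) * Ψ j := by
        simp only [dft_apply Ψ, smul_eq_mul, mul_sum, sum_mul, map_sum, map_mul, conj_stdAddChar]
        rw [sum_comm]
        refine sum_congr rfl fun j _ ↦ sum_congr rfl fun k _ ↦ ?_
        rw [mul_comm j k]
        ring
    _ = N * ∑ j, conj (Φ j) * Ψ j := by
        simp only [sum_stdAddChar_mul_dft, map_mul, conj_natCast, mul_sum, mul_assoc]

lemma sum_norm_sq_dft (Φ : ZMod N → ℂ) : ∑ k, ‖𝓕 Φ k‖ ^ 2 = N * ∑ j, ‖Φ j‖ ^ 2 := by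
  exact_mod_cast (by simpa only [conj_mul'] using sum_conj_dft_mul_dft Φ Φ :
    ∑ k, (‖𝓕 Φ k‖ : ℂ) ^ 2 = N * ∑ j, (‖Φ j‖ : ℂ) ^ 2)

lemma dft_comp_add_const {E : Type*} [AddCommGroup E] [Module ℂ E] (Φ : ZMod N → E)
    (a k : ZMod N) : 𝓕 (fun j ↦ Φ (j + a)) k = stdAddChar (a * k) • 𝓕 Φ k := by
  simp only [dft_apply, smul_sum, smul_smul, ← AddChar.map_add_eq_mul]
  exact Fintype.sum_equiv (Equiv.addRight a) _ _ fun j ↦ by simp only [Equiv.coe_addRight]; ring_nf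

end ZMod

open scoped Real ZMod

lemma norm_one_sub_exp_I_mul_sq (t : ℝ) : ‖1 - exp (I * t)‖ ^ 2 = 2 - 2 * Real.cos t := by
  rw [norm_sub_rev, norm_exp_I_mul_ofReal_sub_one, Real.norm_eq_abs, sq_abs, mul_pow,
    Real.sin_sq, Real.cos_sq, mul_div_cancel₀ _ two_ne_zero]
  ring

lemma Real.cos_le_cos_of_forall_le_abs_sub_two_pi_mul {a t : ℝ} (ha : 0 ≤ a)
    (h : ∀ k : ℤ, a ≤ |t - 2 * π * k|) : Real.cos t ≤ Real.cos a := by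
  set s := (t : Real.Angle).toReal
  obtain ⟨k, hk⟩ : ∃ k : ℤ, t - s = 2 * π * k :=
    Real.Angle.angle_eq_iff_two_pi_dvd_sub.1 (Real.Angle.coe_toReal _).symm
  have hs : s = t - 2 * π * k := by linarith
  have hcos : Real.cos t = Real.cos |s| := by
    rw [Real.cos_abs, Real.Angle.cos_toReal, Real.Angle.cos_coe]
  rw [hcos]
  exact Real.cos_le_cos_of_nonneg_of_le_pi ha (Real.Angle.abs_toReal_le_pi _) (hs ▸ h k)

lemma exp_I_mul_div_mul_stdAddChar_intCast (Ω : ℝ) {N : ℕ} [NeZero N] (j : ℤ) :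
    exp (I * (Ω / N)) * ZMod.stdAddChar (j : ZMod N) = exp (I * ↑((Ω + 2 * π * j) / N)) := by
  rw [ZMod.stdAddChar_coe, ← exp_add]
  congr 1
  push_cast
  ring

lemma norm_one_sub_exp_I_mul_div_sq_le {Ω δ : ℝ} (hδ₀ : 0 ≤ δ)
    (hδ : ∀ k : ℤ, δ ≤ |Ω - 2 * π * k|) {N : ℕ} [NeZero N] (k : ZMod N) :
    ‖1 - exp (I * (δ / N))‖ ^ 2 ≤ ‖1 - exp (I * (Ω / N)) * ZMod.stdAddChar k‖ ^ 2 := by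
  obtain ⟨j, rfl⟩ := ZMod.intCast_surjective k
  have hN : (0 : ℝ) < N := Nat.cast_pos.2 (Nat.pos_of_neZero N)
  rw [exp_I_mul_div_mul_stdAddChar_intCast, ← ofReal_natCast, ← ofReal_div,
    norm_one_sub_exp_I_mul_sq, norm_one_sub_exp_I_mul_sq, sub_le_sub_iff_left,
    mul_le_mul_iff_right₀ two_pos]
  refine Real.cos_le_cos_of_forall_le_abs_sub_two_pi_mul (by positivity) fun k ↦ ?_
  have hscale : (Ω + 2 * π * j) / N - 2 * π * k = (Ω - 2 * π * ↑(k * N - j)) / N := by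
    push_cast; field_simp; ring
  rw [hscale, abs_div, Nat.abs_cast]
  exact div_le_div_of_nonneg_right (hδ _) hN.le

theorem stmt16_general (N : ℕ) [NeZero N] (Ω δ : ℝ)
    (hδ : IsLeast {d : ℝ | ∃ k : ℤ, d = |Ω - 2 * Real.pi * k|} δ)
    (f : ZMod N → ℂ) :
    ∑ x : ZMod N, ‖f x - Complex.exp (Complex.I * (Ω / N)) * f (x + 1)‖^2
      ≥ ‖1 - Complex.exp (Complex.I * (δ / N))‖^2 * ∑ x : ZMod N, ‖f x‖^2 := by
  obtain ⟨⟨k₀, rfl⟩, hδ⟩ := hδ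
  set c := exp (I * (Ω / N))
  have hdft (k : ZMod N) :
      𝓕 (fun x ↦ f x - c * f (x + 1)) k = (1 - c * ZMod.stdAddChar k) * 𝓕 f k := by
    change 𝓕 (f - c • fun x ↦ f (x + 1)) k = _
    rw [map_sub, map_smul, Pi.sub_apply, Pi.smul_apply, ZMod.dft_comp_add_const, one_mul,
      smul_eq_mul, smul_eq_mul]
    ring
  refine le_of_mul_le_mul_left ?_ (Nat.cast_pos.2 (Nat.pos_of_neZero N) : (0 : ℝ) < N)
  rw [mul_left_comm, ← ZMod.sum_norm_sq_dft, ← ZMod.sum_norm_sq_dft, mul_sum]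
  refine sum_le_sum fun k _ ↦ ?_
  rw [hdft, norm_mul, mul_pow]
  exact mul_le_mul_of_nonneg_right
    (norm_one_sub_exp_I_mul_div_sq_le (abs_nonneg _) (fun k ↦ hδ ⟨k, rfl⟩) k) (sq_nonneg _)

/-- On ℤ/Nℤ with constant magnetic phase Ω/N on each edge, for every f:
Σ_x |f(x) − e^{iΩ/N} f(x+1)|² ≥ |1 − e^{iδ/N}|² Σ_x |f(x)|², where δ = dist(Ω, 2πℤ). -/
theorem stmt16 (N : ℕ) [NeZero N] (hN : 1 ≤ N) (Ω δ : ℝ)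
    (hδ : IsLeast {d : ℝ | ∃ k : ℤ, d = |Ω - 2 * Real.pi * k|} δ)
    (f : ZMod N → ℂ) :
    ∑ x : ZMod N, ‖f x - Complex.exp (Complex.I * (Ω / N)) * f (x + 1)‖^2
      ≥ ‖1 - Complex.exp (Complex.I * (δ / N))‖^2 * ∑ x : ZMod N, ‖f x‖^2 :=
  stmt16_general N Ω δ hδ f
end

section
/- The fundamental cycles form a basis: for a finite connected graph G with spanning tree T, every cycle γ ∈ Z₁(G) satisfies γ = Σ_{e ∈ E' ∩ supp(γ)} γ(e) γ_e, where E' is the set of non-tree edges and γ_e the fundamental cycle of e; in particular Z₁(G) is a free ℤ-module with basis {γ_e : e ∈ E'}. -/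
open Finset

/-!
Evaluating `∑_{e ∈ E'} c(e) γ_e` on a non-tree edge `e` returns `c(e)`, because `γ_e` is the only
fundamental cycle passing through `e`; this gives linear independence. For a cycle `η`, the
difference `∑_{e ∈ E'} η(e) γ_e - η` is therefore a cycle supported on the tree `T`, and a cycle on
a tree vanishes: at a vertex carrying flow that is farthest from a root, only the edge back towards
the root could carry it, which contradicts the vanishing boundary.
-/

/-- A 1-chain on a graph, represented as an antisymmetric ℤ-valued function on oriented
edges, is a cycle if it is supported on edges and has vanishing boundary. -/
def IsZCycle {V : Type*} [Fintype V] (G : SimpleGraph V) (η : V → V → ℤ) : Prop :=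
  (∀ x y, η x y = - η y x) ∧ (∀ x y, η x y ≠ 0 → G.Adj x y) ∧ (∀ y, ∑ x, η x y = 0)

namespace SimpleGraph

variable {V : Type*} {T : SimpleGraph V}

theorem IsTree.eq_of_adj_of_dist_lt (hT : T.IsTree) {r v u₁ u₂ : V}
    (h₁ : T.Adj u₁ v) (h₂ : T.Adj u₂ v)
    (hd₁ : T.dist r u₁ < T.dist r v) (hd₂ : T.dist r u₂ < T.dist r v) : u₁ = u₂ := by
  classical
  have exists_path_concat : ∀ {u} (h : T.Adj u v), T.dist r u < T.dist r v →
      ∃ p : T.Walk r u, (p.concat h).IsPath := by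
    intro u h hd
    obtain ⟨p, hp, hlen⟩ := hT.connected.exists_path_of_dist r u
    refine ⟨p, hp.concat (fun hv => ?_) h⟩
    have := (dist_le (p.takeUntil v hv)).trans (p.length_takeUntil_le_length hv)
    omega
  obtain ⟨p₁, hp₁⟩ := exists_path_concat h₁ hd₁
  obtain ⟨p₂, hp₂⟩ := exists_path_concat h₂ hd₂
  have := (hT.isAcyclic.subsingleton_path r v).elim ⟨_, hp₁⟩ ⟨_, hp₂⟩
  exact (Walk.concat_inj (congrArg Subtype.val this)).1

end SimpleGraph

theorem IsZCycle.eq_zero_of_isTree {V : Type*} [Fintype V] {T : SimpleGraph V}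
    (hT : T.IsTree) {ζ : V → V → ℤ} (hζ : IsZCycle T ζ) : ζ = 0 := by
  classical
  obtain ⟨hanti, hsupp, hdiv⟩ := hζ
  by_contra hne
  obtain ⟨a, b, hab⟩ : ∃ a b, ζ a b ≠ 0 := by
    by_contra! h
    exact hne (funext₂ h)
  obtain ⟨v, hv, hmax⟩ := exists_max_image
    ({v | ∃ u, ζ u v ≠ 0} : Finset V) (T.dist a) ⟨b, by simpa using ⟨a, hab⟩⟩
  obtain ⟨u₀, hu₀⟩ : ∃ u, ζ u v ≠ 0 := by simpa using hv
  have closer : ∀ w, ζ w v ≠ 0 → T.dist a w < T.dist a v := fun w hw =>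
    lt_of_le_of_ne (hmax w (by simpa using ⟨v, by rwa [hanti, neg_eq_zero]⟩))
      (hT.dist_ne_of_adj a (hsupp w v hw))
  have hsum : ∑ x, ζ x v = ζ u₀ v := by
    refine Fintype.sum_eq_single u₀ fun x hx => ?_
    by_contra h
    exact hx (hT.eq_of_adj_of_dist_lt (hsupp x v h) (hsupp u₀ v hu₀) (closer x h)
      (closer u₀ hu₀))
  exact hu₀ (hsum.symm.trans (hdiv v))

section FundamentalCycles

variable {V : Type*} [Fintype V]

/-- `γ x y` stands for the fundamental cycle `γ_{[x,y]}` of a non-tree edge `[x,y]`. -/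
structure IsFundamentalCycleFamily (G T : SimpleGraph V) (γ : V → V → V → V → ℤ) : Prop where
  isZCycle : ∀ x y, G.Adj x y → ¬ T.Adj x y → IsZCycle G (γ x y)
  apply_self : ∀ x y, G.Adj x y → ¬ T.Adj x y → γ x y x y = 1
  swap : ∀ x y, γ y x = - γ x y
  eq_or_eq_of_apply_ne_zero : ∀ x y, G.Adj x y → ¬ T.Adj x y → ∀ u v, γ x y u v ≠ 0 →
    ¬ T.Adj u v → (u = x ∧ v = y) ∨ (u = y ∧ v = x)

open scoped Classical in
/-- Every non-tree edge is summed over in both orientations, so for antisymmetric `c` this is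
`2 • ∑_{e ∈ E'} c(e) γ_e`. -/
noncomputable def fundamentalCycleSum (G T : SimpleGraph V) (γ : V → V → V → V → ℤ)
    (c : V → V → ℤ) (u v : V) : ℤ :=
  ∑ x, ∑ y, if G.Adj x y ∧ ¬ T.Adj x y then c x y * γ x y u v else 0

variable {G T : SimpleGraph V} {γ : V → V → V → V → ℤ}

theorem fundamentalCycleSum_swap (hγ : IsFundamentalCycleFamily G T γ) (c : V → V → ℤ)
    (u v : V) : fundamentalCycleSum G T γ c v u = - fundamentalCycleSum G T γ c u v := by
  simp only [fundamentalCycleSum, ← sum_neg_distrib]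
  refine sum_congr rfl fun x _ => sum_congr rfl fun y _ => ?_
  split_ifs with h
  · rw [(hγ.isZCycle x y h.1 h.2).1 v u, mul_neg]
  · exact neg_zero.symm

theorem sum_fundamentalCycleSum_eq_zero (hγ : IsFundamentalCycleFamily G T γ)
    (c : V → V → ℤ) (v : V) : ∑ u, fundamentalCycleSum G T γ c u v = 0 := by
  unfold fundamentalCycleSum
  rw [sum_comm]
  refine sum_eq_zero fun x _ => ?_
  rw [sum_comm]
  refine sum_eq_zero fun y _ => ?_
  split_ifs with h
  · rw [← mul_sum, (hγ.isZCycle x y h.1 h.2).2.2 v, mul_zero]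
  · exact sum_const_zero

open scoped Classical in
theorem fundamentalCycleSum_apply_of_not_adj (hγ : IsFundamentalCycleFamily G T γ)
    {c : V → V → ℤ} (hc : ∀ x y, c x y = - c y x) (hcG : ∀ x y, c x y ≠ 0 → G.Adj x y)
    {u v : V} (huv : ¬ T.Adj u v) : fundamentalCycleSum G T γ c u v = 2 * c u v := by
  rcases eq_or_ne u v with rfl | hne
  · have := fundamentalCycleSum_swap hγ c u u
    have := hc u u
    omega
  set f : V → V → ℤ := fun x y => if G.Adj x y ∧ ¬ T.Adj x y then c x y * γ x y u v else 0
  -- `c x y * γ x y = c y x * γ y x`, as both factors change sign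
  have f_swap : ∀ x y, f y x = f x y := by
    intro x y
    simp only [f, G.adj_comm y x, T.adj_comm y x, hγ.swap x y, hc y x, Pi.neg_apply, neg_mul_neg]
  have f_self : f u v = c u v := by
    by_cases hG : G.Adj u v
    · simp [f, hG, huv, hγ.apply_self u v hG huv]
    · simp only [f, hG, false_and, if_false]
      by_contra h
      exact hG (hcG u v (Ne.symm h))
  have f_eq_zero : ∀ p : V × V, p ≠ (u, v) ∧ p ≠ (v, u) → f p.1 p.2 = 0 := by
    rintro ⟨x, y⟩ ⟨h₁, h₂⟩
    simp only [f]
    split_ifs with h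
    · by_contra hne
      rcases hγ.eq_or_eq_of_apply_ne_zero x y h.1 h.2 u v (right_ne_zero_of_mul hne) huv
        with ⟨rfl, rfl⟩ | ⟨rfl, rfl⟩
      exacts [h₁ rfl, h₂ rfl]
    · rfl
  calc fundamentalCycleSum G T γ c u v = ∑ p : V × V, f p.1 p.2 :=
        (Fintype.sum_prod_type' f).symm
    _ = f u v + f v u := Fintype.sum_eq_add (u, v) (v, u) (by simp [hne]) f_eq_zero
    _ = 2 * c u v := by rw [f_swap u v, f_self, two_mul]

theorem fundamentalCycleSum_of_isZCycle (hT : T.IsTree) (hγ : IsFundamentalCycleFamily G T γ)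
    {η : V → V → ℤ} (hη : IsZCycle G η) (u v : V) :
    fundamentalCycleSum G T γ η u v = 2 * η u v := by
  obtain ⟨hanti, hG, hdiv⟩ := hη
  have hdefect : IsZCycle T fun u v => fundamentalCycleSum G T γ η u v - 2 * η u v := by
    refine ⟨fun x y => ?_, fun x y hxy => ?_, fun y => ?_⟩ <;> dsimp only at *
    · rw [fundamentalCycleSum_swap hγ η x y, hanti x y]
      ring
    · by_contra hT
      exact hxy (by rw [fundamentalCycleSum_apply_of_not_adj hγ hanti hG hT, sub_self])
    · rw [sum_sub_distrib, sum_fundamentalCycleSum_eq_zero hγ, ← mul_sum, hdiv,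
        mul_zero, sub_zero]
  exact sub_eq_zero.mp (congrFun₂ (hdefect.eq_zero_of_isTree hT) u v)

theorem eq_zero_of_fundamentalCycleSum_eq_zero (hγ : IsFundamentalCycleFamily G T γ)
    {c : V → V → ℤ} (hc : ∀ x y, c x y = - c y x)
    (hcE : ∀ x y, c x y ≠ 0 → G.Adj x y ∧ ¬ T.Adj x y)
    (hsum : ∀ u v, fundamentalCycleSum G T γ c u v = 0) : c = 0 := by
  funext u v
  by_contra huv
  have := fundamentalCycleSum_apply_of_not_adj hγ hc (fun x y h => (hcE x y h).1) (hcE u v huv).2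
  rw [hsum] at this
  exact huv (by simp only [Pi.zero_apply]; omega)

end FundamentalCycles

open scoped Classical in
theorem stmt18_general {V : Type*} [Fintype V] (G T : SimpleGraph V)
    (hT : T.IsTree)
    (γ : V → V → (V → V → ℤ))
    (hγcyc : ∀ x y, G.Adj x y → ¬ T.Adj x y → IsZCycle G (γ x y))
    (hγone : ∀ x y, G.Adj x y → ¬ T.Adj x y → γ x y x y = 1)
    (hγanti : ∀ x y, γ y x = - γ x y)
    (hγsupp : ∀ x y, G.Adj x y → ¬ T.Adj x y → ∀ u v, γ x y u v ≠ 0 → ¬ T.Adj u v →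
      (u = x ∧ v = y) ∨ (u = y ∧ v = x)) :
    (∀ η, IsZCycle G η → ∀ u v,
      (∑ x, ∑ y, if G.Adj x y ∧ ¬ T.Adj x y then η x y * γ x y u v else 0) = 2 * η u v) ∧
    (∀ cγ : V → V → ℤ, (∀ x y, cγ x y = - cγ y x) →
      (∀ x y, cγ x y ≠ 0 → G.Adj x y ∧ ¬ T.Adj x y) →
      (∀ u v, (∑ x, ∑ y, if G.Adj x y ∧ ¬ T.Adj x y then cγ x y * γ x y u v else 0) = 0) →
      cγ = 0) :=
  have hγ : IsFundamentalCycleFamily G T γ := ⟨hγcyc, hγone, hγanti, hγsupp⟩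
  ⟨fun _ hη => fundamentalCycleSum_of_isZCycle hT hγ hη,
    fun _ hc hcE hsum => eq_zero_of_fundamentalCycleSum_eq_zero hγ hc hcE hsum⟩

open scoped Classical in
/-- The fundamental cycles γ_e (e a non-tree edge, for a spanning tree T of a finite
connected graph G) form a basis of Z₁(G): every cycle η decomposes as
η = Σ_{e∈E'} η(e) γ_e (each unoriented edge counted twice in the double sum), and the
fundamental cycles are ℤ-linearly independent. -/
theorem stmt18 {V : Type*} [Fintype V] (G T : SimpleGraph V)
    (hTG : T ≤ G) (hT : T.IsTree)
    (γ : V → V → (V → V → ℤ))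
    (hγcyc : ∀ x y, G.Adj x y → ¬ T.Adj x y → IsZCycle G (γ x y))
    (hγone : ∀ x y, G.Adj x y → ¬ T.Adj x y → γ x y x y = 1)
    (hγanti : ∀ x y, γ y x = - γ x y)
    (hγsupp : ∀ x y, G.Adj x y → ¬ T.Adj x y → ∀ u v, γ x y u v ≠ 0 → ¬ T.Adj u v →
      (u = x ∧ v = y) ∨ (u = y ∧ v = x)) :
    (∀ η, IsZCycle G η → ∀ u v,
      (∑ x, ∑ y, if G.Adj x y ∧ ¬ T.Adj x y then η x y * γ x y u v else 0) = 2 * η u v) ∧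
    (∀ cγ : V → V → ℤ, (∀ x y, cγ x y = - cγ y x) →
      (∀ x y, cγ x y ≠ 0 → G.Adj x y ∧ ¬ T.Adj x y) →
      (∀ u v, (∑ x, ∑ y, if G.Adj x y ∧ ¬ T.Adj x y then cγ x y * γ x y u v else 0) = 0) →
      cγ = 0) :=
  stmt18_general G T hT γ hγcyc hγone hγanti hγsupp
end
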